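/- For 0 < p < 1/2, the sum over i ≥ 1 of i * binom(2i, i) * (p(1-p))^i * (1 - 2p)/(2(1-p)) equals p / (1 - 2p)^2. -/

import Mathlib

/-!
With `x = p (1 - p)` one has `1 - 4x = (1 - 2p)²`, so the claim is the value of
`∑ n C(2n, n) xⁿ = 2x / (1 - 4x)^{3/2}`. The generating function `F` of the Catalan numbers `Cₙ`
satisfies `F = 1 + x F²`, hence `(2xF - 1)² = 1 - 4x`; since `2tF(t) - 1` is continuous, equals
`-1` at `t = 0` and never vanishes for `4|t| < 1`, the negative root is the right one. The
relations `C(2n+2, n+1) + 2 Cₙ = 4 C(2n, n)` and `(n+1) C(2n+2, n+1) = 2 (2n+1) C(2n, n)` then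
turn into linear equations for `∑ C(2n, n) xⁿ` and `∑ n C(2n, n) xⁿ`.
-/

open Finset Set

lemma catalan_le_four_pow (n : ℕ) : catalan n ≤ 4 ^ n :=
  calc catalan n ≤ (n + 1) * catalan n := Nat.le_mul_of_pos_left _ n.succ_pos
    _ = n.centralBinom := succ_mul_catalan_eq_centralBinom n
    _ ≤ 4 ^ n := Nat.centralBinom_le_four_pow n

lemma centralBinom_succ_add_two_mul_catalan (n : ℕ) :
    (n + 1).centralBinom + 2 * catalan n = 4 * n.centralBinom := by
  apply Nat.eq_of_mul_eq_mul_left n.succ_pos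
  calc (n + 1) * ((n + 1).centralBinom + 2 * catalan n)
      = (n + 1) * (n + 1).centralBinom + 2 * ((n + 1) * catalan n) := by ring
    _ = 2 * (2 * n + 1) * n.centralBinom + 2 * n.centralBinom := by
        rw [Nat.succ_mul_centralBinom_succ, succ_mul_catalan_eq_centralBinom]
    _ = (n + 1) * (4 * n.centralBinom) := by ring

lemma summable_mul_pow_of_abs_le {a : ℕ → ℝ} {k : ℕ} (ha : ∀ n, |a n| ≤ n ^ k * 4 ^ n)
    {x : ℝ} (hx : 4 * |x| < 1) : Summable fun n => a n * x ^ n := by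
  refine .of_norm_bounded (summable_pow_mul_geometric_of_norm_lt_one k (r := 4 * |x|)
    (by rwa [Real.norm_of_nonneg (by positivity)])) fun n => ?_
  rw [norm_mul, norm_pow, Real.norm_eq_abs, Real.norm_eq_abs, mul_pow, ← mul_assoc]
  gcongr
  exact ha n

lemma tsum_eq_zero_add_mul {f g : ℕ → ℝ} (hf : Summable f) {x : ℝ}
    (h : ∀ n, f (n + 1) = x * g n) : ∑' n, f n = f 0 + x * ∑' n, g n := by
  rw [hf.tsum_eq_zero_add, ← tsum_mul_left]
  simp only [h]

noncomputable def catalanGF (x : ℝ) : ℝ := ∑' n, (catalan n : ℝ) * x ^ n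

noncomputable def centralBinomGF (x : ℝ) : ℝ := ∑' n, (n.centralBinom : ℝ) * x ^ n

section GeneratingFunctions

variable {x : ℝ}

lemma summable_catalan_mul_pow (hx : 4 * |x| < 1) :
    Summable fun n => (catalan n : ℝ) * x ^ n :=
  summable_mul_pow_of_abs_le (k := 0) (fun n => by
    simpa [abs_of_nonneg] using (Nat.cast_le (α := ℝ)).2 (catalan_le_four_pow n)) hx

lemma summable_centralBinom_mul_pow (hx : 4 * |x| < 1) :
    Summable fun n => (n.centralBinom : ℝ) * x ^ n :=
  summable_mul_pow_of_abs_le (k := 0) (fun n => by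
    simpa [abs_of_nonneg] using (Nat.cast_le (α := ℝ)).2 (Nat.centralBinom_le_four_pow n)) hx

lemma summable_mul_centralBinom_mul_pow (hx : 4 * |x| < 1) :
    Summable fun n : ℕ => (n : ℝ) * n.centralBinom * x ^ n :=
  summable_mul_pow_of_abs_le (k := 1) (fun n => by
    rw [abs_of_nonneg (by positivity), pow_one]
    gcongr
    exact_mod_cast Nat.centralBinom_le_four_pow n) hx

lemma catalanGF_sq (hx : 4 * |x| < 1) :
    catalanGF x ^ 2 = ∑' n, (catalan (n + 1) : ℝ) * x ^ n := by
  have hnorm := (summable_catalan_mul_pow hx).norm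
  rw [catalanGF, sq, tsum_mul_tsum_eq_tsum_sum_antidiagonal_of_summable_norm hnorm hnorm]
  refine tsum_congr fun n => ?_
  rw [catalan_succ', Nat.cast_sum, sum_mul]
  refine sum_congr rfl fun ij hij => ?_
  rw [HasAntidiagonal.mem_antidiagonal] at hij
  rw [← hij, pow_add]
  push_cast
  ring

lemma catalanGF_eq_one_add_mul_sq (hx : 4 * |x| < 1) :
    catalanGF x = 1 + x * catalanGF x ^ 2 := by
  rw [catalanGF_sq hx, catalanGF, tsum_eq_zero_add_mul (summable_catalan_mul_pow hx)
    (g := fun n => (catalan (n + 1) : ℝ) * x ^ n) fun n => by rw [pow_succ']; ring]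
  simp

lemma sq_two_mul_mul_catalanGF_sub_one (hx : 4 * |x| < 1) :
    (2 * x * catalanGF x - 1) ^ 2 = 1 - 4 * x := by
  linear_combination (-4 * x) * catalanGF_eq_one_add_mul_sq hx

lemma continuousOn_catalanGF (hx : 4 * |x| < 1) : ContinuousOn catalanGF (Icc (-|x|) |x|) := by
  refine continuousOn_tsum (fun n => by fun_prop)
    (summable_catalan_mul_pow (x := |x|) (by rwa [abs_abs])) fun n t ht => ?_
  rw [norm_mul, norm_pow, Real.norm_natCast, Real.norm_eq_abs]
  gcongr _ * ?_ ^ _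
  exact abs_le.2 ht

lemma two_mul_mul_catalanGF_sub_one_neg (hx : 4 * |x| < 1) : 2 * x * catalanGF x - 1 < 0 := by
  set g : ℝ → ℝ := fun t => 2 * t * catalanGF t - 1
  have hsub : uIcc 0 x ⊆ Icc (-|x|) |x| := uIcc_subset_Icc (by simp) ⟨neg_abs_le x, le_abs_self x⟩
  have hF := (continuousOn_catalanGF hx).mono hsub
  have hg : ContinuousOn g (uIcc 0 x) := by fun_prop
  have hne : ∀ t ∈ uIcc 0 x, g t ≠ 0 := fun t ht h0 => by
    have ht4 : 4 * |t| < 1 := by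
      have := abs_le.2 (hsub ht); linarith
    have := sq_two_mul_mul_catalanGF_sub_one ht4
    simp only [g] at h0
    rw [h0] at this
    linarith [le_abs_self t]
  by_contra! hpos
  obtain ⟨t, ht, h0⟩ := intermediate_value_uIcc hg (show (0 : ℝ) ∈ uIcc (g 0) (g x) from
    mem_uIcc_of_le (by simp [g]) hpos)
  exact hne t ht h0

lemma two_mul_mul_catalanGF (hx : 4 * |x| < 1) :
    2 * x * catalanGF x = 1 - √(1 - 4 * x) := by
  have h := two_mul_mul_catalanGF_sub_one_neg hx
  have := congrArg Real.sqrt (sq_two_mul_mul_catalanGF_sub_one hx)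
  rw [Real.sqrt_sq_eq_abs, abs_of_neg h] at this
  linarith

lemma centralBinomGF_eq_one_add (hx : 4 * |x| < 1) :
    centralBinomGF x = 1 + x * (4 * centralBinomGF x - 2 * catalanGF x) := by
  have hB := summable_centralBinom_mul_pow hx
  have hC := summable_catalan_mul_pow hx
  have h := tsum_eq_zero_add_mul hB (g := fun n =>
      4 * ((n.centralBinom : ℝ) * x ^ n) - 2 * ((catalan n : ℝ) * x ^ n)) fun n => by
    have : ((n + 1).centralBinom : ℝ) = 4 * n.centralBinom - 2 * catalan n := by
      rw [eq_sub_iff_add_eq]; exact_mod_cast centralBinom_succ_add_two_mul_catalan n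
    rw [this, pow_succ']; ring
  rwa [(hB.mul_left 4).tsum_sub (hC.mul_left 2), tsum_mul_left, tsum_mul_left,
    Nat.centralBinom_zero, Nat.cast_one, pow_zero, one_mul] at h

lemma hasSum_centralBinom_mul_pow (hx : 4 * |x| < 1) :
    HasSum (fun n => (n.centralBinom : ℝ) * x ^ n) (√(1 - 4 * x))⁻¹ := by
  have h14 : 0 < 1 - 4 * x := by linarith [le_abs_self x]
  have hs := Real.sqrt_pos.2 h14
  have key : centralBinomGF x * √(1 - 4 * x) = 1 := by
    apply mul_right_cancel₀ hs.ne'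
    linear_combination centralBinomGF_eq_one_add hx - two_mul_mul_catalanGF hx
      + centralBinomGF x * Real.sq_sqrt h14.le
  convert (summable_centralBinom_mul_pow hx).hasSum
  exact (eq_inv_of_mul_eq_one_left key).symm

lemma hasSum_mul_centralBinom_mul_pow (hx : 4 * |x| < 1) :
    HasSum (fun n : ℕ => (n : ℝ) * n.centralBinom * x ^ n)
      (2 * x / ((1 - 4 * x) * √(1 - 4 * x))) := by
  have h14 : 0 < 1 - 4 * x := by linarith [le_abs_self x]
  have hs := Real.sqrt_pos.2 h14
  have hS := summable_mul_centralBinom_mul_pow hx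
  have h := tsum_eq_zero_add_mul hS (g := fun n =>
      4 * ((n : ℝ) * n.centralBinom * x ^ n) + 2 * ((n.centralBinom : ℝ) * x ^ n)) fun n => by
    have : ((n + 1 : ℕ) : ℝ) * (n + 1).centralBinom = 2 * (2 * n + 1) * n.centralBinom := by
      exact_mod_cast Nat.succ_mul_centralBinom_succ n
    rw [this, pow_succ']; ring
  rw [(hS.mul_left 4).tsum_add ((summable_centralBinom_mul_pow hx).mul_left 2), tsum_mul_left,
    tsum_mul_left, (hasSum_centralBinom_mul_pow hx).tsum_eq, Nat.cast_zero, zero_mul,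
    zero_mul, zero_add] at h
  convert hS.hasSum
  rw [div_eq_iff (by positivity)]
  linear_combination (-√(1 - 4 * x)) * h - 2 * x * inv_mul_cancel₀ hs.ne'

end GeneratingFunctions

theorem expected_one_ahead_index (p : ℝ) (h0 : 0 < p) (h2 : p < 1/2) :
    ∑' i : ℕ, (i : ℝ) * (Nat.centralBinom i : ℝ) * (p * (1 - p)) ^ i
        * ((1 - 2 * p) / (2 * (1 - p)))
      = p / (1 - 2 * p) ^ 2 := by
  have h2p : 0 < 1 - 2 * p := by linarith
  have hx : 4 * |p * (1 - p)| < 1 := by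
    rw [abs_of_pos (by nlinarith)]; nlinarith
  have hdisc : 1 - 4 * (p * (1 - p)) = (1 - 2 * p) ^ 2 := by ring
  rw [((hasSum_mul_centralBinom_mul_pow hx).mul_right _).tsum_eq, hdisc, Real.sqrt_sq h2p.le]
  field_simp [(by linarith : 1 - p ≠ 0)]
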